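/- There exist ε > 0 and C > 0 such that for every Δt ∈ (0, ε), the quantities C̃(Δt) := (1−ρΔt)(β(Δt)(1−φ(Δt))(A(Δt)+γΔt) + φ(Δt)(1−λ(Δt)β(Δt))) and D(Δt) := (1−ρΔt)B(Δt)σ_S²/(2ρ) satisfy |C̃(Δt) − (3√2/4)·γ^{1/2}(σ_K/σ_S)^{1/2}·√Δt| ≤ C·Δt and |D(Δt) − (σ_Sσ_K/(2ρ) − (√2/8)·γ^{1/2}σ_S^{1/2}σ_K^{3/2}·√Δt/ρ)| ≤ C·Δt. -/

import Mathlib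

open Real Set Filter Topology

/-!
Write `k = σ_K/σ_S`. On `[0, k]` the quartic decreases strictly from `k⁴` to `-2γk⁵Δt`, so it
has exactly one root `β` there. The quartic equals `(k - β)²(k + β)² - Δt F(β)` with
`F(β) = 2γk⁵ + O(k - β)`, hence `k - β = u + O(Δt)` where `u = √(γk³Δt/2)`. Eliminating `λ`, `φ`,
`A`, `B` turns `C̃` and `D` into rational functions of `β`, `k`, `Δt`, and expanding these to first
order in `k - β` and `Δt` gives `C̃ = 3u/(2k) + O(Δt)` and `D = σ_S²(k - u/2)/(2ρ) + O(Δt)`.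
-/

-- `k` stands for `σ_K / σ_S` and `t` for `Δt`.
def monopolyQuartic (k γ ρ t b : ℝ) : ℝ :=
  (1 - ρ * t) * b ^ 4 - (2 - ρ * t + b * γ * t) * k ^ 2 * b ^ 2 + k ^ 4 * (1 - b * γ * t)

def quarticForcing (k γ ρ b : ℝ) : ℝ :=
  b * γ * k ^ 2 * (b ^ 2 + k ^ 2) - ρ * b ^ 2 * (k ^ 2 - b ^ 2)

noncomputable def ctilClosedForm (k γ ρ t β : ℝ) : ℝ :=
  (1 - ρ * t) * (γ * t * k ^ 3 * β ^ 3 / (k ^ 4 - (1 - ρ * t) * β ^ 4) / k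
    + (k - β) * (k + β) / (k ^ 2 + β ^ 2))

noncomputable def dClosedForm (k γ ρ t β : ℝ) : ℝ :=
  (1 - ρ * t) ^ 2 * (2 * k ^ 2 * β / (k ^ 2 + β ^ 2)
    - γ * t * k ^ 3 * (β ^ 2 * k) / (k ^ 4 - (1 - ρ * t) * β ^ 4))

theorem abs_mul_sub_le_of_le_one {w x a : ℝ} (hw0 : 0 ≤ w) (hw1 : w ≤ 1) :
    |w * x - a| ≤ |x - a| + (1 - w) * |a| := by
  calc |w * x - a| = |w * (x - a) + -((1 - w) * a)| := by ring_nf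
    _ ≤ |w * (x - a)| + |-((1 - w) * a)| := abs_add_le _ _
    _ ≤ |x - a| + (1 - w) * |a| := by
        rw [abs_neg, abs_mul, abs_mul, abs_of_nonneg hw0, abs_of_nonneg (sub_nonneg.2 hw1)]
        gcongr
        exact mul_le_of_le_one_left (abs_nonneg _) hw1

theorem eventually_mul_lt (a : ℝ) {b : ℝ} (hb : 0 < b) : ∀ᶠ t in 𝓝[>] (0 : ℝ), a * t < b :=
  (((continuous_const_mul a).tendsto' 0 0 (mul_zero a)).eventually_lt_const hb).filter_mono
    nhdsWithin_le_nhds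

section

variable {k γ ρ t β u c : ℝ}

theorem monopolyQuartic_eq_sub_quarticForcing (k γ ρ t b : ℝ) :
    monopolyQuartic k γ ρ t b = (k - b) ^ 2 * (k + b) ^ 2 - t * quarticForcing k γ ρ b := by
  unfold monopolyQuartic quarticForcing; ring

theorem monopolyQuartic_sub (k γ ρ t a b : ℝ) :
    monopolyQuartic k γ ρ t a - monopolyQuartic k γ ρ t b =
      (b - a) * ((a + b) * ((1 - ρ * t) * (2 * k ^ 2 - a ^ 2 - b ^ 2) + ρ * t * k ^ 2)
        + γ * t * k ^ 2 * (a ^ 2 + a * b + b ^ 2) + γ * t * k ^ 4) := by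
  unfold monopolyQuartic; ring

theorem strictAntiOn_monopolyQuartic (hk : 0 < k) (hγ : 0 < γ) (hρ : 0 ≤ ρ) (ht : 0 < t)
    (hρt : ρ * t ≤ 1) : StrictAntiOn (monopolyQuartic k γ ρ t) (Icc 0 k) := by
  rintro a ⟨ha0, hak⟩ b ⟨hb0, hbk⟩ hab
  rw [← sub_pos, monopolyQuartic_sub]
  refine mul_pos (sub_pos.mpr hab) ?_
  have h1 : 0 ≤ (1 - ρ * t) * (2 * k ^ 2 - a ^ 2 - b ^ 2) + ρ * t * k ^ 2 :=
    add_nonneg (mul_nonneg (by linarith) (by nlinarith)) (by positivity)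
  have h2 := mul_nonneg (add_nonneg ha0 hb0) h1
  have h3 : 0 ≤ γ * t * k ^ 2 * (a ^ 2 + a * b + b ^ 2) := by positivity
  have h4 : 0 < γ * t * k ^ 4 := by positivity
  linarith

theorem existsUnique_monopolyQuartic_root (hk : 0 < k) (hγ : 0 < γ) (hρ : 0 ≤ ρ) (ht : 0 < t)
    (hρt : ρ * t ≤ 1) : ∃! β, β ∈ Ioc 0 k ∧ monopolyQuartic k γ ρ t β = 0 := by
  have hcont : Continuous (monopolyQuartic k γ ρ t) := by unfold monopolyQuartic; fun_prop
  have h0 : monopolyQuartic k γ ρ t 0 = k ^ 4 := by unfold monopolyQuartic; ring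
  have hk' : monopolyQuartic k γ ρ t k = -(2 * γ * t * k ^ 5) := by unfold monopolyQuartic; ring
  obtain ⟨β, hβ, hroot⟩ : (0 : ℝ) ∈ monopolyQuartic k γ ρ t '' Icc 0 k :=
    intermediate_value_Icc' hk.le hcont.continuousOn
      ⟨by rw [hk']; nlinarith [mul_pos (mul_pos hγ ht) (pow_pos hk 5)], by rw [h0]; positivity⟩
  have hβ0 : β ≠ 0 := by rintro rfl; exact (pow_pos hk 4).ne' (h0.symm.trans hroot)
  refine ⟨β, ⟨⟨lt_of_le_of_ne hβ.1 (Ne.symm hβ0), hβ.2⟩, hroot⟩, fun b ⟨hb, hb0⟩ => ?_⟩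
  exact (strictAntiOn_monopolyQuartic hk hγ hρ ht hρt).injOn ⟨hb.1.le, hb.2⟩ hβ
    (hb0.trans hroot.symm)

theorem quarticForcing_le (hγ : 0 ≤ γ) (hρ : 0 ≤ ρ) (hβ0 : 0 ≤ β) (hβk : β ≤ k) :
    quarticForcing k γ ρ β ≤ 2 * γ * k ^ 5 := by
  unfold quarticForcing
  have hk : 0 ≤ k := hβ0.trans hβk
  have h1 : β * (β ^ 2 + k ^ 2) ≤ k * (k ^ 2 + k ^ 2) := by gcongr
  have h2 : 0 ≤ ρ * β ^ 2 * (k ^ 2 - β ^ 2) := mul_nonneg (by positivity) (by nlinarith)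
  nlinarith [mul_le_mul_of_nonneg_left h1 (by positivity : 0 ≤ γ * k ^ 2)]

theorem sq_sub_le_of_monopolyQuartic_eq_zero (hk : 0 < k) (hγ : 0 ≤ γ) (hρ : 0 ≤ ρ)
    (ht : 0 ≤ t) (hβ0 : 0 ≤ β) (hβk : β ≤ k) (hroot : monopolyQuartic k γ ρ t β = 0) :
    (k - β) ^ 2 ≤ 2 * γ * k ^ 3 * t := by
  rw [monopolyQuartic_eq_sub_quarticForcing, sub_eq_zero] at hroot
  have hF := mul_le_mul_of_nonneg_left (quarticForcing_le hγ hρ hβ0 hβk) ht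
  have : (k - β) ^ 2 * k ^ 2 ≤ (k - β) ^ 2 * (k + β) ^ 2 := by gcongr; linarith
  refine le_of_mul_le_mul_right ?_ (by positivity : 0 < k ^ 2)
  nlinarith

theorem abs_sub_sub_le_of_monopolyQuartic_eq_zero (hk : 0 < k) (hγ : 0 ≤ γ) (hρ : 0 ≤ ρ)
    (ht : 0 ≤ t) (hβ0 : 0 ≤ β) (hβk : β ≤ k) (hroot : monopolyQuartic k γ ρ t β = 0)
    (hu : 0 < u) (hu2 : u ^ 2 = γ * k ^ 3 * t / 2) :
    |k - β - u| ≤ 2 * (γ * k ^ 2 + ρ * k) * t := by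
  set Q := γ * k ^ 2 * (2 * β ^ 2 + k * β + k ^ 2) + 2 * ρ * β ^ 2 * (k + β)
  have hkey : (k - β - u) * ((k - β + u) * (2 * (k + β) ^ 2)) = -(t * (k - β) * Q) := by
    rw [monopolyQuartic_eq_sub_quarticForcing] at hroot; unfold quarticForcing at hroot
    linear_combination 2 * hroot - 2 * (k + β) ^ 2 * hu2
  have hQ : Q ≤ 2 * k ^ 2 * (2 * (γ * k ^ 2 + ρ * k)) := by
    have h1 : γ * k ^ 2 * (2 * β ^ 2 + k * β + k ^ 2)
        ≤ γ * k ^ 2 * (2 * k ^ 2 + k * k + k ^ 2) := by gcongr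
    have h2 : 2 * ρ * β ^ 2 * (k + β) ≤ 2 * ρ * k ^ 2 * (k + k) := by gcongr
    linarith
  have hδ : 0 ≤ k - β := sub_nonneg.2 hβk
  have hQ0 : 0 ≤ Q := by positivity
  have hδu : 0 < k - β + u := by linarith
  refine le_of_mul_le_mul_right ?_ (by positivity : 0 < (k - β + u) * (2 * k ^ 2))
  calc |k - β - u| * ((k - β + u) * (2 * k ^ 2))
      ≤ |k - β - u| * ((k - β + u) * (2 * (k + β) ^ 2)) := by gcongr; linarith
    _ = t * (k - β) * Q := by
        rw [← abs_of_pos (by positivity : 0 < (k - β + u) * (2 * (k + β) ^ 2)), ← abs_mul, hkey,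
          abs_neg, abs_of_nonneg (by positivity)]
    _ ≤ t * (k - β + u) * (2 * k ^ 2 * (2 * (γ * k ^ 2 + ρ * k))) := by
        gcongr; linarith
    _ = 2 * (γ * k ^ 2 + ρ * k) * t * ((k - β + u) * (2 * k ^ 2)) := by ring

theorem abs_mul_div_sub_half_le (hk : 0 < k) (hγ : 0 ≤ γ) (hρ : 0 ≤ ρ) (ht : 0 ≤ t)
    (hβ0 : 0 ≤ β) (hβk : β ≤ k) (hu : 0 < u) (hu2 : u ^ 2 = γ * k ^ 3 * t / 2)
    (hδu : u / 2 ≤ k - β) (hδ : |k - β - u| ≤ c * t) (hδ2 : (k - β) ^ 2 ≤ 2 * γ * k ^ 3 * t)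
    {m : ℝ} (hm0 : 0 ≤ m) (hmk : m ≤ k ^ 3)
    (hm : |(k + β) * (k ^ 2 + β ^ 2) - 4 * m| ≤ 6 * k ^ 2 * (k - β)) :
    |γ * t * k ^ 3 * m / (k ^ 4 - (1 - ρ * t) * β ^ 4) - u / 2|
      ≤ (4 * c + 12 * γ * k ^ 2 + ρ * k) * t := by
  set S := (k + β) * (k ^ 2 + β ^ 2)
  set Dn := k ^ 4 - (1 - ρ * t) * β ^ 4
  have hDn : Dn = (k - β) * S + ρ * t * β ^ 4 := by ring
  have hS : k ^ 3 ≤ S :=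
    calc k ^ 3 = k * k ^ 2 := by ring
      _ ≤ (k + β) * (k ^ 2 + β ^ 2) := by gcongr <;> nlinarith
  have hDn_ge : k ^ 3 * u ≤ 2 * Dn := by
    have h1 := mul_le_mul hδu hS (by positivity) (sub_nonneg.2 hβk)
    have h2 : 0 ≤ ρ * t * β ^ 4 := by positivity
    rw [hDn]; linarith
  have hDn_pos : 0 < 2 * Dn := lt_of_lt_of_le (by positivity) hDn_ge
  have hct : 0 ≤ c * t := (abs_nonneg _).trans hδ
  set R := 4 * m * (u - (k - β)) + (k - β) * (4 * m - S) - ρ * t * β ^ 4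
  have hsplit : γ * t * k ^ 3 * m / Dn - u / 2 = u * R / (2 * Dn) := by
    have : Dn ≠ 0 := by linarith
    field_simp
    linear_combination (-4 * m) * hu2
  have hR : |R| ≤ k ^ 3 * ((4 * c + 12 * γ * k ^ 2 + ρ * k) * t) := by
    have h1 : |4 * m * (u - (k - β))| ≤ 4 * k ^ 3 * (c * t) := by
      rw [abs_mul, abs_of_nonneg (by positivity), abs_sub_comm]; gcongr
    have h2 : |(k - β) * (4 * m - S)| ≤ 6 * k ^ 2 * (2 * γ * k ^ 3 * t) := by
      rw [abs_mul, abs_of_nonneg (sub_nonneg.2 hβk), abs_sub_comm]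
      nlinarith [mul_le_mul_of_nonneg_left hm (sub_nonneg.2 hβk)]
    have h3 : |ρ * t * β ^ 4| ≤ ρ * t * k ^ 4 := by
      rw [abs_of_nonneg (by positivity)]; gcongr
    have h4 := abs_add_three (4 * m * (u - (k - β))) ((k - β) * (4 * m - S)) (-(ρ * t * β ^ 4))
    rw [abs_neg, ← sub_eq_add_neg] at h4
    linarith
  rw [hsplit, abs_div, abs_mul, abs_of_pos hu, abs_of_pos hDn_pos, div_le_iff₀ hDn_pos]
  calc u * |R| ≤ u * (k ^ 3 * ((4 * c + 12 * γ * k ^ 2 + ρ * k) * t)) := by gcongr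
    _ = (4 * c + 12 * γ * k ^ 2 + ρ * k) * t * (k ^ 3 * u) := by ring
    _ ≤ (4 * c + 12 * γ * k ^ 2 + ρ * k) * t * (2 * Dn) := by
        gcongr
        nlinarith [mul_nonneg (mul_nonneg hγ (sq_nonneg k)) ht, mul_nonneg (mul_nonneg hρ hk.le) ht]

theorem abs_mul_div_sub_div_le (hk : 0 < k) (hγ : 0 ≤ γ) (ht : 0 ≤ t) (hβ0 : 0 ≤ β)
    (hδ : |k - β - u| ≤ c * t) (hδ2 : (k - β) ^ 2 ≤ 2 * γ * k ^ 3 * t) :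
    |(k - β) * (k + β) / (k ^ 2 + β ^ 2) - u / k| ≤ (c / k + γ * k) * t := by
  have hkβ : 0 < k ^ 2 + β ^ 2 := by positivity
  have hsplit : (k - β) * (k + β) / (k ^ 2 + β ^ 2) - u / k
      = (k - β - u) / k + (k - β) ^ 2 * β / (k * (k ^ 2 + β ^ 2)) := by
    field_simp; ring
  have h2 : (k - β) ^ 2 * β / (k * (k ^ 2 + β ^ 2)) ≤ γ * k * t := by
    rw [div_le_iff₀ (by positivity)]
    nlinarith [mul_le_mul_of_nonneg_right hδ2 hβ0, sq_nonneg (k - β),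
      mul_nonneg (mul_nonneg hγ ht) (mul_nonneg (sq_nonneg k) (sq_nonneg (k - β)))]
  have h1 : |(k - β - u) / k| ≤ c * t / k := by
    rw [abs_div, abs_of_pos hk]; exact div_le_div_of_nonneg_right hδ hk.le
  calc _ ≤ |(k - β - u) / k| + |(k - β) ^ 2 * β / (k * (k ^ 2 + β ^ 2))| := by
        rw [hsplit]; exact abs_add_le _ _
    _ ≤ c * t / k + γ * k * t := by
        rw [abs_of_nonneg (by positivity : 0 ≤ (k - β) ^ 2 * β / (k * (k ^ 2 + β ^ 2)))]
        linarith
    _ = (c / k + γ * k) * t := by ring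

theorem abs_mul_div_sub_le (hk : 0 < k) (hδ2 : (k - β) ^ 2 ≤ 2 * γ * k ^ 3 * t) :
    |2 * k ^ 2 * β / (k ^ 2 + β ^ 2) - k| ≤ 2 * γ * k ^ 2 * t := by
  have hkβ : 0 < k ^ 2 + β ^ 2 := by positivity
  have hsplit : 2 * k ^ 2 * β / (k ^ 2 + β ^ 2) - k = -(k * (k - β) ^ 2 / (k ^ 2 + β ^ 2)) := by
    field_simp; ring
  rw [hsplit, abs_neg, abs_of_nonneg (by positivity), div_le_iff₀ hkβ]
  nlinarith [mul_le_mul_of_nonneg_left hδ2 hk.le, mul_nonneg hk.le (sq_nonneg (k - β)),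
    mul_nonneg (mul_nonneg hk.le (sq_nonneg (k - β))) (sq_nonneg β)]

theorem abs_ctilClosedForm_sub_le (hk : 0 < k) (hγ : 0 ≤ γ) (hρ : 0 ≤ ρ) (ht : 0 ≤ t)
    (hρt : ρ * t ≤ 1) (hβ0 : 0 ≤ β) (hβk : β ≤ k) (hu : 0 < u) (huk : u ≤ k)
    (hu2 : u ^ 2 = γ * k ^ 3 * t / 2) (hδu : u / 2 ≤ k - β) (hδ : |k - β - u| ≤ c * t)
    (hδ2 : (k - β) ^ 2 ≤ 2 * γ * k ^ 3 * t) :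
    |ctilClosedForm k γ ρ t β - 3 * u / (2 * k)|
      ≤ ((4 * c + 12 * γ * k ^ 2 + ρ * k) / k + (c / k + γ * k) + 3 * ρ / 2) * t := by
  have hZ := abs_mul_div_sub_half_le hk hγ hρ ht hβ0 hβk hu hu2 hδu hδ hδ2 (m := β ^ 3)
    (by positivity) (pow_le_pow_left₀ hβ0 hβk 3) (by
      rw [show (k + β) * (k ^ 2 + β ^ 2) - 4 * β ^ 3 = (k - β) * (k ^ 2 + 2 * k * β + 3 * β ^ 2)
        by ring, abs_of_nonneg (mul_nonneg (sub_nonneg.2 hβk) (by positivity))]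
      nlinarith [mul_nonneg (sub_nonneg.2 hβk) (sub_nonneg.2 hβk),
        mul_nonneg hβ0 (sub_nonneg.2 hβk)])
  have hE := abs_mul_div_sub_div_le hk hγ ht hβ0 hδ hδ2
  set Z := γ * t * k ^ 3 * β ^ 3 / (k ^ 4 - (1 - ρ * t) * β ^ 4)
  set E := (k - β) * (k + β) / (k ^ 2 + β ^ 2)
  have hsum : |Z / k + E - 3 * u / (2 * k)| ≤ |Z - u / 2| / k + |E - u / k| := by
    rw [show Z / k + E - 3 * u / (2 * k) = (Z - u / 2) / k + (E - u / k) by field_simp; ring,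
      ← abs_of_pos hk, ← abs_div, abs_of_pos hk]
    exact abs_add_le _ _
  have hlead : (1 - (1 - ρ * t)) * |3 * u / (2 * k)| ≤ 3 * ρ / 2 * t := by
    have : 3 * u / (2 * k) ≤ 3 / 2 := by rw [div_le_iff₀ (by positivity)]; linarith
    rw [abs_of_nonneg (by positivity), sub_sub_cancel]
    nlinarith [mul_nonneg hρ ht]
  have hZk : |Z - u / 2| / k ≤ (4 * c + 12 * γ * k ^ 2 + ρ * k) / k * t := by
    rw [div_mul_eq_mul_div]; exact div_le_div_of_nonneg_right hZ hk.le
  unfold ctilClosedForm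
  refine (abs_mul_sub_le_of_le_one (by linarith) (by linarith [mul_nonneg hρ ht])).trans ?_
  linarith

theorem abs_dClosedForm_sub_le (hk : 0 < k) (hγ : 0 ≤ γ) (hρ : 0 ≤ ρ) (ht : 0 ≤ t)
    (hρt : ρ * t ≤ 1) (hβ0 : 0 ≤ β) (hβk : β ≤ k) (hu : 0 < u) (huk : u ≤ k)
    (hu2 : u ^ 2 = γ * k ^ 3 * t / 2) (hδu : u / 2 ≤ k - β) (hδ : |k - β - u| ≤ c * t)
    (hδ2 : (k - β) ^ 2 ≤ 2 * γ * k ^ 3 * t) :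
    |dClosedForm k γ ρ t β - (k - u / 2)|
      ≤ (2 * γ * k ^ 2 + (4 * c + 12 * γ * k ^ 2 + ρ * k) + 2 * ρ * k) * t := by
  have hZ := abs_mul_div_sub_half_le hk hγ hρ ht hβ0 hβk hu hu2 hδu hδ hδ2 (m := β ^ 2 * k)
    (by positivity) (by nlinarith [pow_le_pow_left₀ hβ0 hβk 2]) (by
      rw [show (k + β) * (k ^ 2 + β ^ 2) - 4 * (β ^ 2 * k) = (k - β) * (k ^ 2 + 2 * k * β - β ^ 2)
        by ring, abs_of_nonneg (mul_nonneg (sub_nonneg.2 hβk) (by nlinarith))]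
      nlinarith [mul_nonneg (sub_nonneg.2 hβk) (sub_nonneg.2 hβk),
        mul_nonneg hβ0 (sub_nonneg.2 hβk)])
  have hY := abs_mul_div_sub_le (β := β) hk hδ2
  set Z := γ * t * k ^ 3 * (β ^ 2 * k) / (k ^ 4 - (1 - ρ * t) * β ^ 4)
  set Y := 2 * k ^ 2 * β / (k ^ 2 + β ^ 2)
  have hsum : |Y - Z - (k - u / 2)| ≤ |Y - k| + |Z - u / 2| := by
    rw [show Y - Z - (k - u / 2) = (Y - k) - (Z - u / 2) by ring]
    exact abs_sub _ _
  have hlead : (1 - (1 - ρ * t) ^ 2) * |k - u / 2| ≤ 2 * ρ * k * t := by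
    have hw : 1 - (1 - ρ * t) ^ 2 ≤ 2 * ρ * t := by nlinarith [mul_nonneg hρ ht]
    rw [abs_of_nonneg (by linarith), mul_right_comm]
    exact mul_le_mul hw (by linarith) (by linarith) (by positivity)
  unfold dClosedForm
  refine (abs_mul_sub_le_of_le_one (by positivity) (by nlinarith [mul_nonneg hρ ht])).trans ?_
  linarith

theorem exists_monopolyQuartic_expansion (hk : 0 < k) (hγ : 0 < γ) (hρ : 0 < ρ) :
    ∃ C > 0, ∀ᶠ t in 𝓝[>] (0 : ℝ), ρ * t < 1 ∧
      ∀ β ∈ Ioc 0 k, monopolyQuartic k γ ρ t β = 0 →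
        |ctilClosedForm k γ ρ t β - 3 * √(γ * k ^ 3 * t / 2) / (2 * k)| ≤ C * t ∧
        |dClosedForm k γ ρ t β - (k - √(γ * k ^ 3 * t / 2) / 2)| ≤ C * t := by
  set c := 2 * (γ * k ^ 2 + ρ * k)
  set C₁ := (4 * c + 12 * γ * k ^ 2 + ρ * k) / k + (c / k + γ * k) + 3 * ρ / 2
  set C₂ := 2 * γ * k ^ 2 + (4 * c + 12 * γ * k ^ 2 + ρ * k) + 2 * ρ * k
  refine ⟨C₁ + C₂, by positivity, ?_⟩
  filter_upwards [self_mem_nhdsWithin, eventually_mul_lt ρ one_pos,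
    eventually_mul_lt (8 * c ^ 2) (by positivity : 0 < γ * k ^ 3),
    eventually_mul_lt (γ * k) two_pos] with t (ht : 0 < t) hρt hct hkt
  refine ⟨hρt, fun β ⟨hβ0, hβk⟩ hroot => ?_⟩
  set u := √(γ * k ^ 3 * t / 2)
  have hu2 : u ^ 2 = γ * k ^ 3 * t / 2 := sq_sqrt (by positivity)
  have hu : 0 < u := sqrt_pos.2 (by positivity)
  have huk : u ≤ k := (sqrt_le_left hk.le).2 (by nlinarith [pow_pos hk 2])
  have hcu : 2 * (c * t) ≤ u :=
    (le_sqrt (by positivity) (by positivity)).2 (by nlinarith [pow_pos hk 3])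
  have hδ := abs_sub_sub_le_of_monopolyQuartic_eq_zero hk hγ.le hρ.le ht.le hβ0.le hβk hroot hu hu2
  have hδ2 := sq_sub_le_of_monopolyQuartic_eq_zero hk hγ.le hρ.le ht.le hβ0.le hβk hroot
  have hδu : u / 2 ≤ k - β := by linarith [(abs_le.1 hδ).1]
  have hC₁ : C₁ * t ≤ (C₁ + C₂) * t := by gcongr; exact le_add_of_nonneg_right (by positivity)
  have hC₂ : C₂ * t ≤ (C₁ + C₂) * t := by gcongr; exact le_add_of_nonneg_left (by positivity)
  exact ⟨(abs_ctilClosedForm_sub_le hk hγ.le hρ.le ht.le hρt.le hβ0.le hβk hu huk hu2 hδu hδ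
      hδ2).trans hC₁,
    (abs_dClosedForm_sub_le hk hγ.le hρ.le ht.le hρt.le hβ0.le hβk hu huk hu2 hδu hδ hδ2).trans hC₂⟩

theorem pow_four_sub_mul_pow_four_pos (hβ0 : 0 < β) (hβk : β ≤ k) (hρt : 0 < ρ * t) :
    0 < k ^ 4 - (1 - ρ * t) * β ^ 4 := by
  have hk : 0 ≤ k := hβ0.le.trans hβk
  have : 0 ≤ (k - β) * ((k + β) * (k ^ 2 + β ^ 2)) := by
    have := sub_nonneg.2 hβk; positivity
  nlinarith [mul_pos hρt (pow_pos hβ0 4)]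

end

theorem coefficients_eq_closedForm {σS σK γ ρ t β lam φ A B Ctil D : ℝ} (hσS : σS ≠ 0)
    (hσK : σK ≠ 0) (hDn : (σK / σS) ^ 4 - (1 - ρ * t) * β ^ 4 ≠ 0)
    (hlam : lam = β * σS ^ 2 / (σK ^ 2 + β ^ 2 * σS ^ 2))
    (hφ : φ = 1 - lam * β / (1 - lam * β))
    (hA : A = (1 - ρ * t) * (1 - φ) ^ 2 * γ * t / (1 - (1 - ρ * t) * (1 - φ) ^ 2))
    (hB : B = (1 - ρ * t) * β * (2 * (1 - lam * β) - β * (A + γ * t)))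
    (hCtil : Ctil = (1 - ρ * t) * (β * (1 - φ) * (A + γ * t) + φ * (1 - lam * β)))
    (hD : D = (1 - ρ * t) * B * σS ^ 2 / (2 * ρ)) :
    Ctil = ctilClosedForm (σK / σS) γ ρ t β ∧
      D = σS ^ 2 / (2 * ρ) * dClosedForm (σK / σS) γ ρ t β := by
  set k := σK / σS with hk_def
  have hk : k ≠ 0 := div_ne_zero hσK hσS
  have hkβ : k ^ 2 + β ^ 2 ≠ 0 := by positivity
  have hlamβ : lam * β = β ^ 2 / (k ^ 2 + β ^ 2) := by
    rw [hlam, hk_def]; field_simp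
  have hs : 1 - lam * β = k ^ 2 / (k ^ 2 + β ^ 2) := by rw [hlamβ]; field_simp; ring
  have h1φ : 1 - φ = β ^ 2 / k ^ 2 := by rw [hφ, hs, hlamβ]; field_simp; ring
  have hden : 1 - (1 - ρ * t) * (β ^ 2 / k ^ 2) ^ 2 = (k ^ 4 - (1 - ρ * t) * β ^ 4) / k ^ 4 := by
    field_simp
  have hAγ : A + γ * t = γ * t * k ^ 4 / (k ^ 4 - (1 - ρ * t) * β ^ 4) := by
    rw [hA, h1φ, hden]; field_simp; ring
  constructor
  · rw [hCtil, h1φ, show φ = 1 - β ^ 2 / k ^ 2 by linarith, hs, hAγ]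
    unfold ctilClosedForm; field_simp; ring
  · rw [hD, show (1 - ρ * t) * B * σS ^ 2 / (2 * ρ) = σS ^ 2 / (2 * ρ) * ((1 - ρ * t) * B) by ring,
      hB, hs, hAγ]
    unfold dClosedForm; field_simp

theorem sqrt_leading_eq {γ k t : ℝ} (hk : 0 ≤ k) (ht : 0 ≤ t) :
    √(γ * k ^ 3 * t / 2) = √γ * k * √k * √t / √2 := by
  rw [sqrt_div' _ zero_le_two, sqrt_mul' _ ht, show k ^ 3 = k ^ 2 * k by ring, ← mul_assoc,
    sqrt_mul' _ hk, sqrt_mul' _ (sq_nonneg k), sqrt_sq hk]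

theorem ctil_leading_eq {γ k t : ℝ} (hk : 0 < k) (ht : 0 ≤ t) :
    3 * √2 / 4 * √γ * √k * √t = 3 * √(γ * k ^ 3 * t / 2) / (2 * k) := by
  have h2 : √2 ^ 2 = 2 := sq_sqrt zero_le_two
  rw [sqrt_leading_eq hk.le ht]
  field_simp
  linear_combination (2 * √γ * √t) * h2

theorem d_leading_eq {σS σK γ ρ t : ℝ} (hσS : 0 < σS) (hσK : 0 < σK) (ht : 0 ≤ t) :
    σS * σK / (2 * ρ) - √2 / 8 * √γ * √σS * σK ^ ((3 : ℝ) / 2) * √t / ρ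
      = σS ^ 2 / (2 * ρ) * (σK / σS - √(γ * (σK / σS) ^ 3 * t / 2) / 2) := by
  have h2 : √2 ^ 2 = 2 := sq_sqrt zero_le_two
  have hS : √σS ^ 2 = σS := sq_sqrt hσS.le
  rw [show (3 : ℝ) / 2 = 1 + 1 / 2 by norm_num, rpow_add hσK, rpow_one, ← sqrt_eq_rpow,
    sqrt_leading_eq (div_pos hσK hσS).le ht, sqrt_div' _ hσS.le]
  field_simp
  linear_combination (-4 * √σS ^ 2 * (√γ * √σK * √t / ρ)) * h2 - 8 * (√γ * √σK * √t / ρ) * hS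

/-- for small `Δt > 0`, the value-function coefficients
`C̃ = (1−ρΔt)(β(1−φ)(A+γΔt) + φ(1−λβ))` and `D = (1−ρΔt)Bσ_S²/(2ρ)` satisfy
`C̃ = (3√2/4)γ^{1/2}(σ_K/σ_S)^{1/2}√Δt + O(Δt)` and
`D = σ_Sσ_K/(2ρ) − (√2/8)γ^{1/2}σ_S^{1/2}σ_K^{3/2}√Δt/ρ + O(Δt)`. -/
theorem stmt5 (σS σK γ ρ : ℝ) (hσS : 0 < σS) (hσK : 0 < σK) (hγ : 0 < γ) (hρ : 0 < ρ) :
    ∃ ε > 0, ∃ C > 0, ∀ Δt : ℝ, 0 < Δt → Δt < ε →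
      ∃ β lam φ A B Ctil D : ℝ,
        (β ∈ Set.Ioc 0 (σK / σS) ∧
          0 = (1 - ρ * Δt) * β ^ 4
                - (2 - ρ * Δt + β * γ * Δt) * (σK / σS) ^ 2 * β ^ 2
                + (σK / σS) ^ 4 * (1 - β * γ * Δt)) ∧
        (∀ b : ℝ, b ∈ Set.Ioc 0 (σK / σS) →
          0 = (1 - ρ * Δt) * b ^ 4
                - (2 - ρ * Δt + b * γ * Δt) * (σK / σS) ^ 2 * b ^ 2
                + (σK / σS) ^ 4 * (1 - b * γ * Δt) → b = β) ∧
        lam = β * σS ^ 2 / (σK ^ 2 + β ^ 2 * σS ^ 2) ∧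
        φ = 1 - lam * β / (1 - lam * β) ∧
        A = (1 - ρ * Δt) * (1 - φ) ^ 2 * γ * Δt / (1 - (1 - ρ * Δt) * (1 - φ) ^ 2) ∧
        B = (1 - ρ * Δt) * β * (2 * (1 - lam * β) - β * (A + γ * Δt)) ∧
        Ctil = (1 - ρ * Δt) * (β * (1 - φ) * (A + γ * Δt) + φ * (1 - lam * β)) ∧
        D = (1 - ρ * Δt) * B * σS ^ 2 / (2 * ρ) ∧
        |Ctil - 3 * Real.sqrt 2 / 4 * Real.sqrt γ * Real.sqrt (σK / σS) * Real.sqrt Δt|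
          ≤ C * Δt ∧
        |D - (σS * σK / (2 * ρ)
              - Real.sqrt 2 / 8 * Real.sqrt γ * Real.sqrt σS * σK ^ ((3 : ℝ) / 2)
                  * Real.sqrt Δt / ρ)|
          ≤ C * Δt := by
  have hk : 0 < σK / σS := div_pos hσK hσS
  have hs : 0 < σS ^ 2 / (2 * ρ) := by positivity
  obtain ⟨C, hC, hexp⟩ := exists_monopolyQuartic_expansion hk hγ hρ
  obtain ⟨ε, hε, hεexp⟩ := (nhdsGT_basis (0 : ℝ)).eventually_iff.mp hexp
  refine ⟨ε, hε, (1 + σS ^ 2 / (2 * ρ)) * C, by positivity, fun t ht htε => ?_⟩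
  obtain ⟨hρt, hbounds⟩ := hεexp ⟨ht, htε⟩
  obtain ⟨β, ⟨hβ, hroot⟩, huniq⟩ := existsUnique_monopolyQuartic_root hk hγ hρ.le ht hρt.le
  refine ⟨β, _, _, _, _, _, _, ⟨hβ, hroot.symm⟩, fun b hb h => huniq b ⟨hb, h.symm⟩,
    rfl, rfl, rfl, rfl, rfl, rfl, ?_⟩
  obtain ⟨hCtil, hD⟩ := coefficients_eq_closedForm hσS.ne' hσK.ne'
    (pow_four_sub_mul_pow_four_pos hβ.1 hβ.2 (mul_pos hρ ht)).ne' rfl rfl rfl rfl rfl rfl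
  obtain ⟨hCtil_le, hD_le⟩ := hbounds β hβ hroot
  rw [hCtil, hD, ctil_leading_eq hk ht.le, d_leading_eq hσS hσK ht.le, ← mul_sub, abs_mul,
    abs_of_pos hs]
  constructor
  · exact hCtil_le.trans (by nlinarith [mul_pos (mul_pos hs hC) ht])
  · calc σS ^ 2 / (2 * ρ) * |_| ≤ σS ^ 2 / (2 * ρ) * (C * t) := by gcongr
      _ ≤ (1 + σS ^ 2 / (2 * ρ)) * C * t := by nlinarith [mul_pos hC ht]
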